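/- Let C be a finite candidate set, L a linear order on C, k a nonnegative integer, and v a linear-order vote on C that is within k adjacent swaps of some linear order single-peaked with respect to L. Then for every subset C' ⊆ C, the restriction of v to C' is within k adjacent swaps of some linear order on C' that is single-peaked with respect to the restriction of L to C'. -/

import Mathlib

variable {α : Type*} [DecidableEq α]

/-- `l` is a linear-order vote on the finite candidate set `s`:
a duplicate-free list containing exactly the elements of `s`;
earlier in the list means more preferred (for a societal axis `L`,
earlier in the list means smaller in the order `L`). -/
def IsVoteOn (s : Finset α) (l : List α) : Prop :=
  l.Nodup ∧ ∀ a, a ∈ l ↔ a ∈ s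

/-- `a` is ranked strictly before `b` in the list `l`. -/
def Prefers (l : List α) (a b : α) : Prop :=
  l.idxOf a < l.idxOf b

instance (l : List α) (a b : α) : Decidable (Prefers l a b) :=
  inferInstanceAs (Decidable (_ < _))

/-- `v` is single-peaked with respect to the societal axis `L`. -/
def SinglePeaked (L v : List α) : Prop :=
  ∀ c1 c2 c3, c1 ∈ L → c2 ∈ L → c3 ∈ L →
    ((Prefers L c1 c2 ∧ Prefers L c2 c3) ∨ (Prefers L c3 c2 ∧ Prefers L c2 c1)) →
    Prefers v c1 c2 → Prefers v c2 c3

/-- `v` is single-caved with respect to the societal axis `L`. -/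
def SingleCaved (L v : List α) : Prop :=
  ∀ c1 c2 c3, c1 ∈ L → c2 ∈ L → c3 ∈ L →
    ((Prefers L c1 c2 ∧ Prefers L c2 c3) ∨ (Prefers L c3 c2 ∧ Prefers L c2 c1)) →
    Prefers v c2 c1 → Prefers v c3 c2

/-- The restriction of a ranking/order `l` to the subset `C` of candidates. -/
def restrictList (C : Finset α) (l : List α) : List α :=
  l.filter (fun a => decide (a ∈ C))

/-- The plurality score of candidate `c` in the election with candidate set `C`
and votes `V` (each vote a linear order on a set containing `C`): the number of
votes whose most preferred candidate among `C` is `c`. -/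
def pluralityScore (C : Finset α) (V : List (List α)) (c : α) : ℕ :=
  V.countP (fun v => decide ((restrictList C v).head? = some c))

/-- `p` is a plurality winner of the election `(C, V)`. -/
def PluralityWinner (C : Finset α) (V : List (List α)) (p : α) : Prop :=
  p ∈ C ∧ ∀ c ∈ C, pluralityScore C V c ≤ pluralityScore C V p

/-- `l'` is obtained from `l` by one swap of adjacent elements. -/
def AdjSwap (l l' : List α) : Prop :=
  ∃ (u w : List α) (x y : α), l = u ++ x :: y :: w ∧ l' = u ++ y :: x :: w

/-- `WithinSwaps k l l'` : `l` can be transformed into `l'` by a sequence of at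
most `k` adjacent swaps. -/
def WithinSwaps : ℕ → List α → List α → Prop
  | 0, l, l' => l = l'
  | (k+1), l, l' => l = l' ∨ ∃ l'', AdjSwap l l'' ∧ WithinSwaps k l'' l'

/-- `v` is swoon-SP w.r.t. axis `L` on candidate set `C`: the restriction of `v` to
`C` minus `v`'s most preferred candidate is single-peaked with respect to the
restriction of `L` to that set. -/
def SwoonSP (C : Finset α) (L v : List α) : Prop :=
  ∀ t, v.head? = some t →
    SinglePeaked (restrictList (C.erase t) L) (restrictList (C.erase t) v)

/-- The `k`-radius neighborhood of `c` with respect to `C'` and the axis `L`: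
if `C'`, listed in `L`-increasing order, is `d_1, ..., d_r` and `c = d_i`, this
is `{d_j : |i - j| ≤ k}`. -/
def nbhd (k : ℕ) (L : List α) (C' : Finset α) (c : α) : Finset α :=
  ((restrictList C' L).drop ((restrictList C' L).idxOf c - k)).take
    ((restrictList C' L).idxOf c + k + 1 - ((restrictList C' L).idxOf c - k))
    |>.toFinset

/-- The plurality election `(C, V)` is `k`-local with respect to axis `L`. -/
def KLocal (k : ℕ) (L : List α) (C : Finset α) (V : List (List α)) : Prop :=
  ∀ C' ⊆ C, ∀ c ∈ C', pluralityScore (nbhd k L C' c) V c = pluralityScore C' V c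

/-- In a `(a1, a2, 0)` scoring election over three candidates, the number of points
candidate `c` receives from (unit-weight) vote `v`. -/
def score3 (a1 a2 : ℕ) (v : List α) (c : α) : ℕ :=
  if v.idxOf c = 0 then a1 else if v.idxOf c = 1 then a2 else 0

/-- Indicator that the vote `v` does not veto (rank last) candidate `c`. -/
def vetoInd (v : List α) (c : α) : ℕ :=
  if v.getLast? = some c then 0 else 1

/-- The approval score of `c` given approval ballots `W`. -/
def approvalScore {I : Type*} [Fintype I] (W : I → Finset α) (c : α) : ℕ :=
  (Finset.univ.filter fun i => c ∈ W i).card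

/-- `p` is an approval winner of the election with candidate set `C` and ballots `W`. -/
def ApprovalWinner (C : Finset α) {I : Type*} [Fintype I] (W : I → Finset α) (p : α) : Prop :=
  p ∈ C ∧ ∀ c ∈ C, approvalScore W c ≤ approvalScore W p

/-!
Restriction is filtering, and filtering does not change the relative order of the surviving
candidates, so a single-peaked order `v'` restricts to an order that is single-peaked for the
restricted axis; and filtering maps an adjacent swap either to an adjacent swap or to nothing,
so `k` swaps from `v` to `v'` restrict to at most `k` swaps between the restrictions.
-/

theorem List.Sublist.prefers_iff {l₁ l₂ : List α} {a b : α} (hs : l₁.Sublist l₂) (hnd : l₂.Nodup)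
    (ha : a ∈ l₁) (hb : b ∈ l₁) : Prefers l₁ a b ↔ Prefers l₂ a b := by
  induction hs with
  | slnil => rfl
  | @cons l₁ l₂ x hs ih =>
    obtain ⟨hx, hnd⟩ := List.nodup_cons.mp hnd
    have hne : ∀ {c}, c ∈ l₁ → x ≠ c := fun hc h => hx (h ▸ hs.subset hc)
    simpa [Prefers, List.idxOf_cons_ne _ (hne ha), List.idxOf_cons_ne _ (hne hb)] using
      ih hnd ha hb
  | @cons_cons l₁ l₂ x hs ih =>
    obtain ⟨hx, hnd⟩ := List.nodup_cons.mp hnd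
    have hne : ∀ {c}, c ∈ l₁ → x ≠ c := fun hc h => hx (h ▸ hs.subset hc)
    rcases List.mem_cons.mp ha with rfl | ha' <;> rcases List.mem_cons.mp hb with rfl | hb'
    · simp [Prefers]
    · simp [Prefers, List.idxOf_cons_ne _ (hne hb')]
    · simp [Prefers, List.idxOf_cons_ne _ (hne ha')]
    · simpa [Prefers, List.idxOf_cons_ne _ (hne ha'), List.idxOf_cons_ne _ (hne hb')] using
        ih hnd ha' hb'

theorem prefers_restrictList_iff {C' : Finset α} {l : List α} {a b : α} (hl : l.Nodup)
    (ha : a ∈ restrictList C' l) (hb : b ∈ restrictList C' l) :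
    Prefers (restrictList C' l) a b ↔ Prefers l a b :=
  (List.filter_sublist).prefers_iff hl ha hb

theorem mem_restrictList {C' : Finset α} {l : List α} {a : α} :
    a ∈ restrictList C' l ↔ a ∈ l ∧ a ∈ C' := by
  simp [restrictList]

theorem IsVoteOn.restrict {C C' : Finset α} {v : List α} (hv : IsVoteOn C v)
    (hC' : C' ⊆ C) : IsVoteOn C' (restrictList C' v) :=
  ⟨hv.1.filter _, fun a => by
    rw [mem_restrictList, hv.2]
    exact ⟨And.right, fun ha => ⟨hC' ha, ha⟩⟩⟩

theorem SinglePeaked.restrict {L v : List α} (hL : L.Nodup) (hv : v.Nodup) (hLv : L ⊆ v)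
    (hSP : SinglePeaked L v) (C' : Finset α) :
    SinglePeaked (restrictList C' L) (restrictList C' v) := by
  intro c₁ c₂ c₃ h₁ h₂ h₃ haxis hpref
  have hsub : restrictList C' L ⊆ restrictList C' v := List.filter_subset _ hLv
  have hmem : ∀ {c}, c ∈ restrictList C' L → c ∈ L := fun hc => (mem_restrictList.mp hc).1
  simp only [prefers_restrictList_iff hL, h₁, h₂, h₃] at haxis
  rw [prefers_restrictList_iff hv (hsub h₁) (hsub h₂)] at hpref
  rw [prefers_restrictList_iff hv (hsub h₂) (hsub h₃)]
  exact hSP c₁ c₂ c₃ (hmem h₁) (hmem h₂) (hmem h₃) haxis hpref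

theorem WithinSwaps.succ {β : Type*} {k : ℕ} {l l' : List β} (h : WithinSwaps k l l') :
    WithinSwaps (k + 1) l l' := by
  induction k generalizing l with
  | zero => exact Or.inl h
  | succ k ih =>
    rcases h with h | ⟨l'', hs, hw⟩
    · exact Or.inl h
    · exact Or.inr ⟨l'', hs, ih hw⟩

theorem AdjSwap.filter {β : Type*} (p : β → Bool) {l l' : List β} (h : AdjSwap l l') :
    l.filter p = l'.filter p ∨ AdjSwap (l.filter p) (l'.filter p) := by
  obtain ⟨u, w, x, y, rfl, rfl⟩ := h
  by_cases hx : p x <;> by_cases hy : p y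
  · exact Or.inr ⟨u.filter p, w.filter p, x, y, by simp [hx, hy], by simp [hx, hy]⟩
  all_goals exact Or.inl (by simp [hx, hy])

theorem WithinSwaps.filter {β : Type*} (p : β → Bool) {k : ℕ} {l l' : List β}
    (h : WithinSwaps k l l') : WithinSwaps k (l.filter p) (l'.filter p) := by
  induction k generalizing l with
  | zero => exact congrArg _ h
  | succ k ih =>
    rcases h with rfl | ⟨l'', hs, hw⟩
    · exact Or.inl rfl
    · rcases hs.filter p with he | hs'
      · exact he ▸ (ih hw).succ
      · exact Or.inr ⟨l''.filter p, hs', ih hw⟩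

theorem dodgsonSP_restriction_general
    (C : Finset α) (L v : List α) (k : ℕ)
    (hL : IsVoteOn C L)
    (h : ∃ v', IsVoteOn C v' ∧ SinglePeaked L v' ∧ WithinSwaps k v v') :
    ∀ C' ⊆ C, ∃ w, IsVoteOn C' w ∧ SinglePeaked (restrictList C' L) w ∧
      WithinSwaps k (restrictList C' v) w := by
  obtain ⟨v', hv', hSP, hW⟩ := h
  intro C' hC'
  have hLv' : L ⊆ v' := fun a ha => (hv'.2 a).mpr ((hL.2 a).mp ha)
  exact ⟨restrictList C' v', hv'.restrict hC', hSP.restrict hL.1 hv'.1 hLv' C',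
    hW.filter _⟩

/-- Being within `k` adjacent swaps of a single-peaked order is preserved
under restriction to any subset `C'` of the candidates (restricting both the vote and
the societal axis). -/
theorem dodgsonSP_restriction
    (C : Finset α) (L v : List α) (k : ℕ)
    (hL : IsVoteOn C L) (hv : IsVoteOn C v)
    (h : ∃ v', IsVoteOn C v' ∧ SinglePeaked L v' ∧ WithinSwaps k v v') :
    ∀ C' ⊆ C, ∃ w, IsVoteOn C' w ∧ SinglePeaked (restrictList C' L) w ∧
      WithinSwaps k (restrictList C' v) w :=
  dodgsonSP_restriction_general C L v k hL h
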